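/- arXiv:2507.07915 — 9 statements merged into one kernel-verified Lean document; each statement's English description precedes it below -/
import Mathlib

section
/- Let a, b ≥ 0 and consider two parallel links with latencies ℓ₁(x) = x, ℓ₂(x) = a·x + b. For any rate r with b/2 ≤ r < b, the Price of Anarchy equals (a+1)r² / ((a+1)r² − (r − b/2)²), i.e., the Nash cost is r² and the optimal cost is r² − (r − b/2)²/(a+1). -/
/-- Two parallel links ℓ₁(x) = x, ℓ₂(x) = a·x + b, a, b ≥ 0.
For b/2 ≤ r < b: the flow routing everything on link 1 is a Nash flow with cost r²,
the optimal cost equals r² − (r − b/2)²/(a+1) (it is achieved and is a lower bound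
on the cost of every feasible flow), and the Price of Anarchy at rate r equals
(a+1)r² / ((a+1)r² − (r − b/2)²). -/
theorem stmt2 (a b r : ℝ) (ha : 0 ≤ a) (hb : 0 ≤ b) (hr1 : b / 2 ≤ r) (hr2 : r < b) :
    -- (r, 0) is a Nash flow: the used link 1 has latency at most that of link 2
    ((0 < r → r ≤ a * 0 + b) ∧ (0 < (0 : ℝ) → a * 0 + b ≤ r)) ∧
    -- the optimal cost is r² − (r − b/2)²/(a+1): achieved by some feasible flow
    (∃ g₁ g₂ : ℝ, 0 ≤ g₁ ∧ 0 ≤ g₂ ∧ g₁ + g₂ = r ∧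
      g₁ * g₁ + g₂ * (a * g₂ + b) = r ^ 2 - (r - b / 2) ^ 2 / (a + 1)) ∧
    (∀ g₁ g₂ : ℝ, 0 ≤ g₁ → 0 ≤ g₂ → g₁ + g₂ = r →
      r ^ 2 - (r - b / 2) ^ 2 / (a + 1) ≤ g₁ * g₁ + g₂ * (a * g₂ + b)) ∧
    -- the PoA equality
    r ^ 2 / (r ^ 2 - (r - b / 2) ^ 2 / (a + 1))
      = (a + 1) * r ^ 2 / ((a + 1) * r ^ 2 - (r - b / 2) ^ 2) := by
  have ha1 : (0:ℝ) < a + 1 := by linarith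
  have hb0 : 0 < b := lt_of_le_of_lt (le_trans (by linarith) hr1) hr2
  refine ⟨⟨fun _ => by linarith, fun h => absurd h (lt_irrefl 0)⟩, ?_, ?_, ?_⟩
  · refine ⟨(2*a*r + b)/(2*(a+1)), (2*r - b)/(2*(a+1)), ?_, ?_, ?_, ?_⟩
    · apply div_nonneg (by nlinarith) (by linarith)
    · apply div_nonneg (by linarith) (by linarith)
    · field_simp; ring
    · field_simp; ring
  · intro g₁ g₂ h1 h2 h3
    have hg : g₁ = r - g₂ := by linarith
    subst hg
    rw [sub_le_comm, le_div_iff₀ ha1]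
    nlinarith [sq_nonneg (g₂ * (a+1) - (r - b/2))]
  · have hopt : 0 < r ^ 2 - (r - b / 2) ^ 2 / (a + 1) := by
      rw [sub_pos, div_lt_iff₀ ha1]
      nlinarith [sq_nonneg (r - b/2)]
    rw [div_eq_div_iff hopt.ne' (by nlinarith [sq_nonneg (r - b/2)] : (0:ℝ) < (a + 1) * r ^ 2 - (r - b / 2) ^ 2).ne']
    field_simp
end

section
/- Let a, b > 0 and consider two parallel links with latencies ℓ₁(x) = x, ℓ₂(x) = a·x + b. The Price of Anarchy, maximized over all input rates r > 0, equals 1 + 1/(4a + 3); in particular it is at most 4/3. -/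
/-! On `[b/2, b)` the bound `PoA(r) ≤ (4a+4)/(4a+3)` reduces to `(2r - b)² ≤ r²`, i.e.
`(b - r)(3r - b) ≥ 0`, and on `[b, ∞)` to `(a+1) b² ≤ a r² + b r`.
Both hold with equality at `r = b`, which is therefore the worst rate. -/

/-- The Price of Anarchy at rate r on two links ℓ₁(x) = x, ℓ₂(x) = a·x + b. -/
noncomputable def poa (a b r : ℝ) : ℝ :=
  if r < b / 2 then 1
  else if r < b then (a + 1) * r ^ 2 / ((a + 1) * r ^ 2 - (r - b / 2) ^ 2)
  else (a * r + b) * r / ((a + 1) * (r ^ 2 - (r - b / 2) ^ 2 / (a + 1)))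

namespace ParallelLinks

variable {a b r : ℝ}

lemma one_add_inv_eq (ha : 0 < a) : 1 + 1 / (4 * a + 3) = (4 * a + 4) / (4 * a + 3) := by
  field_simp
  ring

lemma poa_of_lt_half (h : r < b / 2) : poa a b r = 1 := if_pos h

lemma poa_of_mem_Ico (h₁ : b / 2 ≤ r) (h₂ : r < b) :
    poa a b r = (a + 1) * r ^ 2 / ((a + 1) * r ^ 2 - (r - b / 2) ^ 2) := by
  rw [poa, if_neg h₁.not_gt, if_pos h₂]

lemma poa_of_le (ha : 0 < a) (hb : 0 < b) (h : b ≤ r) :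
    poa a b r = (a * r + b) * r / (a * r ^ 2 + b * r - b ^ 2 / 4) := by
  rw [poa, if_neg (by linarith), if_neg h.not_gt]
  congr 1
  field_simp
  ring

lemma poa_self (ha : 0 < a) (hb : 0 < b) : poa a b b = 1 + 1 / (4 * a + 3) := by
  have hden : a * b ^ 2 + b * b - b ^ 2 / 4 = (4 * a + 3) * b ^ 2 / 4 := by ring
  rw [poa_of_le ha hb le_rfl, hden, one_add_inv_eq ha,
    div_eq_div_iff (by positivity) (by positivity)]
  ring

lemma poa_le_of_mem_Ico (ha : 0 < a) (h₁ : b / 2 ≤ r) (h₂ : r < b) :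
    poa a b r ≤ 1 + 1 / (4 * a + 3) := by
  have hr : 0 < r := by linarith
  have key : (2 * r - b) ^ 2 ≤ r ^ 2 := by
    nlinarith [mul_nonneg (sub_nonneg.2 h₂.le) (by linarith : (0 : ℝ) ≤ 3 * r - b)]
  have hden : 0 < (a + 1) * r ^ 2 - (r - b / 2) ^ 2 := by nlinarith [mul_pos ha (mul_pos hr hr)]
  rw [poa_of_mem_Ico h₁ h₂, one_add_inv_eq ha, div_le_div_iff₀ hden (by positivity)]
  nlinarith [mul_le_mul_of_nonneg_left key (by positivity : (0 : ℝ) ≤ a + 1)]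

lemma poa_le_of_le (ha : 0 < a) (hb : 0 < b) (h : b ≤ r) :
    poa a b r ≤ 1 + 1 / (4 * a + 3) := by
  have key : (a + 1) * b ^ 2 ≤ a * r ^ 2 + b * r := by
    nlinarith [mul_le_mul h h hb.le (hb.le.trans h)]
  have hden : 0 < a * r ^ 2 + b * r - b ^ 2 / 4 := by nlinarith [mul_pos ha (mul_pos hb hb)]
  rw [poa_of_le ha hb h, one_add_inv_eq ha, div_le_div_iff₀ hden (by positivity)]
  nlinarith

lemma poa_le (ha : 0 < a) (hb : 0 < b) (r : ℝ) : poa a b r ≤ 1 + 1 / (4 * a + 3) := by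
  rcases lt_or_ge r (b / 2) with h₁ | h₁
  · rw [poa_of_lt_half h₁]
    have : 0 < 1 / (4 * a + 3) := by positivity
    linarith
  rcases lt_or_ge r b with h₂ | h₂
  · exact poa_le_of_mem_Ico ha h₁ h₂
  · exact poa_le_of_le ha hb h₂

end ParallelLinks

/-- For two links ℓ₁(x) = x, ℓ₂(x) = a·x + b with a, b > 0, the Price of Anarchy,
maximized over all input rates r > 0, equals 1 + 1/(4a + 3), which is at most 4/3. -/
theorem stmt3 (a b : ℝ) (ha : 0 < a) (hb : 0 < b) :
    IsGreatest {x : ℝ | ∃ r : ℝ, 0 < r ∧ x = poa a b r} (1 + 1 / (4 * a + 3)) ∧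
    1 + 1 / (4 * a + 3) ≤ 4 / 3 := by
  refine ⟨⟨⟨b, hb, (ParallelLinks.poa_self ha hb).symm⟩, ?_⟩, ?_⟩
  · rintro x ⟨r, -, rfl⟩
    exact ParallelLinks.poa_le ha hb r
  · have : 1 / (4 * a + 3) ≤ 1 / 3 := one_div_le_one_div_of_le (by norm_num) (by linarith)
    linarith
end

section
/- Consider m parallel links with affine latencies ℓᵢ(x) = aᵢ·x + bᵢ (aᵢ, bᵢ ≥ 0), and let f* be a flow for rate r̄ such that all links i with fᵢ* > 0 have equal marginal cost 2aᵢfᵢ* + bᵢ. Let k be a used link attaining the maximum latency L = max over used i of ℓᵢ(fᵢ*). Then for every used link i, ℓᵢ(fᵢ*) ≥ L − b_k/2 ≥ L/2. -/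
/-!
All used links share the marginal cost `μ`, and an affine latency is the average of the
marginal cost and the free-flow latency: `aᵢfᵢ + bᵢ = (μ + bᵢ)/2 ≥ μ/2`. At the link `k` of
maximum latency `μ = 2L - b_k`, so `μ/2 = L - b_k/2`, and `μ = L + a_k f_k ≥ L`.
-/

theorem marginalCost_div_two_le_latency {a b x : ℝ} (hb : 0 ≤ b) :
    (2 * a * x + b) / 2 ≤ a * x + b := by
  linarith

theorem latency_le_marginalCost {a b x : ℝ} (hax : 0 ≤ a * x) :
    a * x + b ≤ 2 * a * x + b := by
  linarith

theorem stmt6_general (m : ℕ) (a b f : Fin m → ℝ)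
    (ha : ∀ i, 0 ≤ a i) (hb : ∀ i, 0 ≤ b i)
    (μ : ℝ) (hμ : ∀ i, 0 < f i → 2 * a i * f i + b i = μ)
    (k : Fin m) (hk : 0 < f k) (L : ℝ)
    (hL : L = a k * f k + b k) :
    ∀ i, 0 < f i → (L - b k / 2 ≤ a i * f i + b i ∧ L / 2 ≤ L - b k / 2) := by
  intro i hi
  have hμk : L - b k / 2 = μ / 2 := by
    rw [hL, ← hμ k hk]
    ring
  have hLμ : L ≤ μ := hL ▸ hμ k hk ▸ latency_le_marginalCost (mul_nonneg (ha k) hk.le)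
  rw [hμk]
  exact ⟨hμ i hi ▸ marginalCost_div_two_le_latency (hb i), by linarith⟩

/-- m parallel links with affine latencies ℓᵢ(x) = aᵢx + bᵢ (aᵢ, bᵢ ≥ 0), and a flow f*
for rate rbar with equal marginal costs 2aᵢfᵢ* + bᵢ = μ on used links. If k is a used link
attaining the maximum latency L over used links, then every used link i has latency
ℓᵢ(fᵢ*) ≥ L − b_k/2 ≥ L/2. -/
theorem stmt6 (m : ℕ) (a b f : Fin m → ℝ) (rbar : ℝ)
    (ha : ∀ i, 0 ≤ a i) (hb : ∀ i, 0 ≤ b i) (hf : ∀ i, 0 ≤ f i)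
    (hsum : ∑ i, f i = rbar)
    (μ : ℝ) (hμ : ∀ i, 0 < f i → 2 * a i * f i + b i = μ)
    (k : Fin m) (hk : 0 < f k) (L : ℝ)
    (hL : L = a k * f k + b k)
    (hmax : ∀ i, 0 < f i → a i * f i + b i ≤ L) :
    ∀ i, 0 < f i → (L - b k / 2 ≤ a i * f i + b i ∧ L / 2 ≤ L - b k / 2) :=
  stmt6_general m a b f ha hb μ hμ k hk L hL
end

section
/- Consider m parallel links with affine latencies ℓᵢ(x) = aᵢ·x + bᵢ, and let f* be an optimal flow for rate r̄ with equal marginal costs on used links. Let L = max over used i of ℓᵢ(fᵢ*). Then the optimal cost satisfies ∑ᵢ fᵢ*·ℓᵢ(fᵢ*) ≥ (L/2)·r̄, and consequently r̄·L / (∑ᵢ fᵢ*·ℓᵢ(fᵢ*)) ≤ 2. -/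
/-!
On a used link the optimality condition `2 aᵢ fᵢ + bᵢ = μ` together with `bᵢ ≥ 0` gives
`ℓᵢ(fᵢ) = (μ + bᵢ) / 2 ≥ μ / 2`, so the optimal cost is at least `(μ / 2) · r̄`. Since
`aₖ fₖ ≥ 0`, the latency `L = ℓₖ(fₖ)` of any used link is at most its marginal cost `μ`.
-/

namespace AffineParallelLinks

theorem half_marginal_le_latency {a b x μ : ℝ} (hb : 0 ≤ b) (h : 2 * a * x + b = μ) :
    μ / 2 ≤ a * x + b := by
  linarith

theorem latency_le_marginal {a x : ℝ} (b : ℝ) (ha : 0 ≤ a) (hx : 0 ≤ x) :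
    a * x + b ≤ 2 * a * x + b := by
  nlinarith [mul_nonneg ha hx]

theorem half_marginal_mul_rate_le_cost {ι : Type*} [Fintype ι] (a b f : ι → ℝ) (μ : ℝ)
    (hb : ∀ i, 0 ≤ b i) (hf : ∀ i, 0 ≤ f i) (hμ : ∀ i, 0 < f i → 2 * a i * f i + b i = μ) :
    μ / 2 * ∑ i, f i ≤ ∑ i, f i * (a i * f i + b i) := by
  rw [Finset.mul_sum]
  refine Finset.sum_le_sum fun i _ => ?_
  rcases (hf i).eq_or_lt with h | h
  · simp [← h]
  · rw [mul_comm]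
    exact mul_le_mul_of_nonneg_left (half_marginal_le_latency (hb i) (hμ i h)) h.le

end AffineParallelLinks

open AffineParallelLinks in
theorem stmt7_general (m : ℕ) (a b f : Fin m → ℝ) (rbar : ℝ)
    (ha : ∀ i, 0 ≤ a i) (hb : ∀ i, 0 ≤ b i) (hf : ∀ i, 0 ≤ f i)
    (hsum : ∑ i, f i = rbar)
    (μ : ℝ) (hμ : ∀ i, 0 < f i → 2 * a i * f i + b i = μ)
    (k : Fin m) (hk : 0 < f k) (L : ℝ)
    (hL : L = a k * f k + b k) :
    (L / 2) * rbar ≤ ∑ i, f i * (a i * f i + b i) ∧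
    rbar * L / (∑ i, f i * (a i * f i + b i)) ≤ 2 := by
  have hrate : 0 ≤ rbar := hsum ▸ Finset.sum_nonneg fun i _ => hf i
  have hL_nonneg : 0 ≤ L := hL ▸ add_nonneg (mul_nonneg (ha k) hk.le) (hb k)
  have hL_le : L ≤ μ := hL ▸ hμ k hk ▸ latency_le_marginal (b k) (ha k) hk.le
  have hbound : L / 2 * rbar ≤ ∑ i, f i * (a i * f i + b i) :=
    calc L / 2 * rbar ≤ μ / 2 * rbar := by gcongr
      _ ≤ _ := hsum ▸ half_marginal_mul_rate_le_cost a b f μ hb hf hμ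
  refine ⟨hbound, div_le_of_le_mul₀ ?_ zero_le_two (by linarith)⟩
  exact (mul_nonneg (div_nonneg hL_nonneg zero_le_two) hrate).trans hbound

/-- m parallel links with affine latencies ℓᵢ(x) = aᵢx + bᵢ (aᵢ, bᵢ ≥ 0), and an optimal
flow f* for rate rbar (equal marginal costs μ on used links, bᵢ ≥ μ on unused links). If k is
a used link attaining the maximum latency L over used links, then the optimal cost
∑ fᵢ*·ℓᵢ(fᵢ*) is at least (L/2)·rbar, and consequently rbar·L / (∑ fᵢ*·ℓᵢ(fᵢ*)) ≤ 2. -/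
theorem stmt7 (m : ℕ) (a b f : Fin m → ℝ) (rbar : ℝ)
    (ha : ∀ i, 0 ≤ a i) (hb : ∀ i, 0 ≤ b i) (hf : ∀ i, 0 ≤ f i)
    (hsum : ∑ i, f i = rbar)
    (μ : ℝ) (hμ : ∀ i, 0 < f i → 2 * a i * f i + b i = μ)
    (hunused : ∀ i, f i = 0 → μ ≤ b i)
    (k : Fin m) (hk : 0 < f k) (L : ℝ)
    (hL : L = a k * f k + b k)
    (hmax : ∀ i, 0 < f i → a i * f i + b i ≤ L) :
    (L / 2) * rbar ≤ ∑ i, f i * (a i * f i + b i) ∧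
    rbar * L / (∑ i, f i * (a i * f i + b i)) ≤ 2 :=
  stmt7_general m a b f rbar ha hb hf hsum μ hμ k hk L hL
end

section
/- Consider m parallel links with affine latencies sorted by strictly increasing constants b₁ < ... < b_m, and an optimal flow f* for rate r with KKT multiplier μ (2aᵢfᵢ* + bᵢ = μ on used links). Let k be the largest used link index. Then ℓ_k(f_k*) ≥ ℓᵢ(fᵢ*) for all used i, i.e., the used link with the largest constant term has the maximum latency under the optimal flow. Moreover, if some used link j has a_j = 0, then j = k. -/
/-! On a used link the KKT condition `2 aᵢ fᵢ + bᵢ = μ` gives the latency `aᵢ fᵢ + bᵢ = (μ + bᵢ) / 2`,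
which is increasing in `bᵢ`, so the used link with the largest constant has the largest latency.
A used link with `aⱼ = 0` has `bⱼ = μ`, while every used link has `bᵢ ≤ μ`; since the `bᵢ` are
strictly increasing, `j` must be the last used link. -/

section KKT

variable {K : Type*} [Field K] [LinearOrder K] [IsStrictOrderedRing K] {a b x μ : K}

theorem affine_latency_eq_of_kkt (h : 2 * a * x + b = μ) : a * x + b = (μ + b) / 2 := by
  linarith

theorem le_of_kkt (ha : 0 ≤ a) (hx : 0 ≤ x) (h : 2 * a * x + b = μ) : b ≤ μ := by
  nlinarith [mul_nonneg ha hx]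

end KKT

theorem stmt9_general (m : ℕ) (a b f : Fin m → ℝ)
    (ha : ∀ i, 0 ≤ a i) (hbmono : StrictMono b)
    (k : Fin m) (hused : ∀ i, 0 < f i ↔ i ≤ k)
    (μ : ℝ) (hμ : ∀ i, i ≤ k → 2 * a i * f i + b i = μ) :
    (∀ i, 0 < f i → a i * f i + b i ≤ a k * f k + b k) ∧
    (∀ j, 0 < f j → a j = 0 → j = k) := by
  constructor
  · intro i hi
    have hik : i ≤ k := (hused i).1 hi
    rw [affine_latency_eq_of_kkt (hμ i hik), affine_latency_eq_of_kkt (hμ k le_rfl)]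
    linarith [hbmono.monotone hik]
  · intro j hj haj
    have hjk : j ≤ k := (hused j).1 hj
    by_contra hne
    have hbj : b j = μ := by simpa [haj] using hμ j hjk
    have hbk : b k ≤ μ := le_of_kkt (ha k) ((hused k).2 le_rfl).le (hμ k le_rfl)
    linarith [hbmono (lt_of_le_of_ne hjk hne)]

/-- m parallel links with affine latencies ℓᵢ(x) = aᵢx + bᵢ (aᵢ, bᵢ ≥ 0), constants bᵢ
strictly increasing, and an optimal flow f* for rate r whose used links are exactly
{i : i ≤ k}, with KKT multiplier μ (2aᵢfᵢ* + bᵢ = μ for i ≤ k). Then link k has the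
maximum latency among used links, and if a used link j has aⱼ = 0 then j = k. -/
theorem stmt9 (m : ℕ) (a b f : Fin m → ℝ) (r : ℝ)
    (ha : ∀ i, 0 ≤ a i) (hbmono : StrictMono b) (hb : ∀ i, 0 ≤ b i)
    (hf : ∀ i, 0 ≤ f i) (hsum : ∑ i, f i = r)
    (k : Fin m) (hused : ∀ i, 0 < f i ↔ i ≤ k)
    (μ : ℝ) (hμ : ∀ i, i ≤ k → 2 * a i * f i + b i = μ) :
    (∀ i, 0 < f i → a i * f i + b i ≤ a k * f k + b k) ∧
    (∀ j, 0 < f j → a j = 0 → j = k) :=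
  stmt9_general m a b f ha hbmono k hused μ hμ
end

section
/- Consider two links with latencies ℓ₁(x) = x and ℓ₂(x) = 2x + 2, predicted rate r̄ = 1, optimal flow for r̄ being f̄₁* = 1, f̄₂* = 0. For any t ≥ 0, let r = 1 + t, define the optimal flow at rate r as f₁* = 1 + (2/3)t, f₂* = (1/3)t, with optimal cost (f₁*)² + 2(f₂*)² + 2f₂*. Then the ratio 2(1 + t)² / ((1 + (2/3)t)² + 2(1/9)t² + (2/3)t) ≥ 2 for all t ≥ 0, with equality at t = 0. -/
/-- `f₁ ℓ₁(f₁) + f₂ ℓ₂(f₂)` for the optimal flow `f₁ = 1 + (2/3)t`, `f₂ = t/3` at rate `1 + t`. -/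
noncomputable def optimalCost (t : ℝ) : ℝ :=
  (1 + (2 / 3) * t) ^ 2 + 2 * (1 / 9) * t ^ 2 + (2 / 3) * t

theorem optimalCost_eq (t : ℝ) : optimalCost t = 1 + 2 * t + (2 / 3) * t ^ 2 := by
  unfold optimalCost
  ring

theorem optimalCost_pos {t : ℝ} (ht : 0 ≤ t) : 0 < optimalCost t := by
  rw [optimalCost_eq]
  positivity

theorem optimalCost_le_sq (t : ℝ) : optimalCost t ≤ (1 + t) ^ 2 := by
  rw [optimalCost_eq]
  nlinarith [sq_nonneg t]

/-- Algebraic core of the 2-robustness lower bound: with links ℓ₁(x)=x, ℓ₂(x)=2x+2 and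
r = 1 + t, the ratio of modified Nash cost 2(1+t)² to the optimal cost
(1 + (2/3)t)² + 2(t/3)² + (2/3)t is at least 2 for all t ≥ 0, with equality at t = 0. -/
theorem stmt12 :
    (∀ t : ℝ, 0 ≤ t →
      2 ≤ 2 * (1 + t) ^ 2 /
        ((1 + (2 / 3) * t) ^ 2 + 2 * (1 / 9) * t ^ 2 + (2 / 3) * t)) ∧
    2 * (1 + (0 : ℝ)) ^ 2 /
        ((1 + (2 / 3) * 0) ^ 2 + 2 * (1 / 9) * 0 ^ 2 + (2 / 3) * 0) = 2 := by
  refine ⟨fun t ht => ?_, by norm_num⟩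
  change 2 ≤ 2 * (1 + t) ^ 2 / optimalCost t
  rw [le_div_iff₀ (optimalCost_pos ht)]
  linarith [optimalCost_le_sq t]
end

section
/- Let a > 0, b > 0, and η̄ ≥ 0, and set u = η̄/b ≥ 0. The function g(u) = (4a·u² + (4 + 2a)u + 2) / ((4a/(a+1))·u² + 4u + 1) satisfies g(u) ≤ max{2, 1 + a} for all u ≥ 0, with g(0) = 2 and g(u) → 1 + a as u → ∞. -/
open Filter

/-- Normalized worst-case ePoA of the ErrorTolerant mechanism on two links:
g(u) = (4a·u² + (4+2a)u + 2) / ((4a/(a+1))·u² + 4u + 1) satisfies g(u) ≤ max{2, 1+a}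
for all u ≥ 0, with g(0) = 2 and g(u) → 1 + a as u → ∞. -/
theorem stmt14 (a b etabar : ℝ) (ha : 0 < a) (hb : 0 < b) (hη : 0 ≤ etabar) :
    (∀ u : ℝ, 0 ≤ u →
      (4 * a * u ^ 2 + (4 + 2 * a) * u + 2) / ((4 * a / (a + 1)) * u ^ 2 + 4 * u + 1)
        ≤ max 2 (1 + a)) ∧
    (4 * a * (0:ℝ) ^ 2 + (4 + 2 * a) * 0 + 2) / ((4 * a / (a + 1)) * (0:ℝ) ^ 2 + 4 * 0 + 1) = 2 ∧
    Tendsto (fun u : ℝ =>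
      (4 * a * u ^ 2 + (4 + 2 * a) * u + 2) / ((4 * a / (a + 1)) * u ^ 2 + 4 * u + 1))
      atTop (nhds (1 + a)) := by
  have ha1 : (0:ℝ) < a + 1 := by linarith
  have hc : (4 * a / (a + 1)) * (a + 1) = 4 * a := div_mul_cancel₀ _ (ne_of_gt ha1)
  refine ⟨?_, by norm_num, ?_⟩
  · intro u hu
    have hD : 0 < (4 * a / (a + 1)) * u ^ 2 + 4 * u + 1 := by positivity
    rw [div_le_iff₀ hD]
    rcases le_total a 1 with h1 | h1
    · rw [max_eq_left (by linarith)]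
      have hcge : 4 * a / (a + 1) ≥ 2 * a := by
        rw [ge_iff_le, le_div_iff₀ ha1]; nlinarith
      nlinarith [mul_nonneg (sub_nonneg.mpr hcge) (sq_nonneg u), mul_nonneg hu hu,
        mul_nonneg ha.le hu]
    · rw [max_eq_right (by linarith)]
      have h4a : (1 + a) * ((4 * a / (a + 1)) * u ^ 2) = 4 * a * u ^ 2 := by
        rw [← mul_assoc]
        nlinarith [hc]
      nlinarith [mul_nonneg ha.le hu]
  · have hne : 4 * a / (a + 1) ≠ 0 := by positivity
    have hlim : Tendsto (fun u : ℝ =>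
        (4 * a + (4 + 2 * a) * u⁻¹ + 2 * u⁻¹ ^ 2) /
        (4 * a / (a + 1) + 4 * u⁻¹ + u⁻¹ ^ 2)) atTop
        (nhds ((4 * a + (4 + 2 * a) * 0 + 2 * 0 ^ 2) / (4 * a / (a + 1) + 4 * 0 + 0 ^ 2))) := by
      have h0 : Tendsto (fun u : ℝ => u⁻¹) atTop (nhds 0) := tendsto_inv_atTop_zero
      exact Tendsto.div
        ((tendsto_const_nhds.add (h0.const_mul _)).add ((h0.pow 2).const_mul 2))
        ((tendsto_const_nhds.add (h0.const_mul _)).add (h0.pow 2))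
        (by simpa using hne)
    have heq : (4 * a + (4 + 2 * a) * 0 + 2 * (0:ℝ) ^ 2) / (4 * a / (a + 1) + 4 * 0 + 0 ^ 2)
        = 1 + a := by
      field_simp
      ring
    rw [heq] at hlim
    refine hlim.congr' ?_
    filter_upwards [eventually_gt_atTop (0:ℝ)] with u hu
    have hu0 : u ≠ 0 := ne_of_gt hu
    have hu2 : u ^ 2 ≠ 0 := pow_ne_zero 2 hu0
    rw [div_eq_div_iff (by positivity) (by positivity)]
    field_simp
end

section
/- Let a ≥ 0, b > 0 and η ≥ 0. Then 1 + a²η² / (a·η² + b·η + a·b·η + (a+1)·b²/4) = 1 + a − a·b·(a+1)·(b/4 + η) / (a·η² + (a+1)·b·η + (a+1)·b²/4), and this quantity is at most 1 + a for all η ≥ 0, equals 1 at η = 0, and is non-decreasing in η. -/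
/-!
Both denominators are the quadratic `q(η) = a η² + (a + 1) b η + (a + 1) b² / 4`, whose
coefficients are nonnegative and whose constant term is positive. The closed form is
`a - a² η² / q = a (q - a η²) / q`; the bound by `1 + a` is `a η² ≤ q`; and monotonicity
of `η² / q(η)` reduces, after cross-multiplying, to
`c η₁ η₂ (η₂ - η₁) + d (η₂² - η₁²) ≥ 0` for the linear and constant coefficients `c`, `d` of `q`.
-/

open Set

section Quadratic

variable {a c d : ℝ}

lemma quadratic_pos (ha : 0 ≤ a) (hc : 0 ≤ c) (hd : 0 < d) {η : ℝ} (hη : 0 ≤ η) :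
    0 < a * η ^ 2 + c * η + d := by
  positivity

lemma sq_mul_sq_div_quadratic_le (ha : 0 ≤ a) (hc : 0 ≤ c) (hd : 0 < d) {η : ℝ} (hη : 0 ≤ η) :
    a ^ 2 * η ^ 2 / (a * η ^ 2 + c * η + d) ≤ a := by
  rw [div_le_iff₀ (quadratic_pos ha hc hd hη)]
  have : 0 ≤ a * (c * η + d) := by positivity
  nlinarith

lemma monotoneOn_mul_sq_div_quadratic {k : ℝ} (hk : 0 ≤ k) (ha : 0 ≤ a) (hc : 0 ≤ c)
    (hd : 0 < d) : MonotoneOn (fun η => k * η ^ 2 / (a * η ^ 2 + c * η + d)) (Ici 0) := by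
  intro x (hx : 0 ≤ x) y (hy : 0 ≤ y) hxy
  rw [div_le_div_iff₀ (quadratic_pos ha hc hd hx) (quadratic_pos ha hc hd hy)]
  have key : 0 ≤ c * (x * y) * (y - x) + d * ((y - x) * (y + x)) := by
    have : 0 ≤ y - x := sub_nonneg.mpr hxy
    positivity
  nlinarith [mul_nonneg hk key]

end Quadratic

/-- Closed-form approximation guarantee of the ErrorTolerant mechanism on two links:
E(η) = 1 + a²η²/(aη² + bη + abη + (a+1)b²/4) equals
1 + a − ab(a+1)(b/4 + η)/(aη² + (a+1)bη + (a+1)b²/4), is at most 1 + a for all η ≥ 0,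
equals 1 at η = 0, and is non-decreasing in η. -/
theorem stmt15 (a b : ℝ) (ha : 0 ≤ a) (hb : 0 < b) :
    (∀ η : ℝ, 0 ≤ η →
      1 + a ^ 2 * η ^ 2 / (a * η ^ 2 + b * η + a * b * η + (a + 1) * b ^ 2 / 4)
        = 1 + a - a * b * (a + 1) * (b / 4 + η)
            / (a * η ^ 2 + (a + 1) * b * η + (a + 1) * b ^ 2 / 4)) ∧
    (∀ η : ℝ, 0 ≤ η →
      1 + a ^ 2 * η ^ 2 / (a * η ^ 2 + b * η + a * b * η + (a + 1) * b ^ 2 / 4) ≤ 1 + a) ∧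
    1 + a ^ 2 * (0:ℝ) ^ 2 / (a * (0:ℝ) ^ 2 + b * 0 + a * b * 0 + (a + 1) * b ^ 2 / 4) = 1 ∧
    (∀ η₁ η₂ : ℝ, 0 ≤ η₁ → η₁ ≤ η₂ →
      1 + a ^ 2 * η₁ ^ 2 / (a * η₁ ^ 2 + b * η₁ + a * b * η₁ + (a + 1) * b ^ 2 / 4)
        ≤ 1 + a ^ 2 * η₂ ^ 2 / (a * η₂ ^ 2 + b * η₂ + a * b * η₂ + (a + 1) * b ^ 2 / 4)) := by
  have hq (η : ℝ) : a * η ^ 2 + b * η + a * b * η + (a + 1) * b ^ 2 / 4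
      = a * η ^ 2 + (a + 1) * b * η + (a + 1) * b ^ 2 / 4 := by ring
  simp only [hq]
  have hc : 0 ≤ (a + 1) * b := by positivity
  have hd : 0 < (a + 1) * b ^ 2 / 4 := by positivity
  refine ⟨fun η hη => ?_, fun η hη => ?_, by simp, fun η₁ η₂ h₁ h₁₂ => ?_⟩
  · have := (quadratic_pos ha hc hd hη).ne'
    field_simp
    ring
  · linarith [sq_mul_sq_div_quadratic_le ha hc hd hη]
  · have := monotoneOn_mul_sq_div_quadratic (sq_nonneg a) ha hc hd h₁ (h₁.trans h₁₂) h₁₂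
    linarith
end

section
/- Consider m parallel links with affine latencies ℓᵢ(x) = aᵢx + bᵢ (aᵢ, bᵢ ≥ 0). Let f and f* be flows for the same rate r, with f a Nash flow of the original latencies (all used links have equal latency not exceeding that of unused links). Then ∑ᵢ fᵢ·ℓᵢ(fᵢ) ≤ ∑ᵢ fᵢ*·ℓᵢ(fᵢ) (variational inequality), and consequently ∑ᵢ fᵢ·ℓᵢ(fᵢ) ≤ (4/3)·∑ᵢ fᵢ*·ℓᵢ(fᵢ*). -/
/-!
At a Nash flow every used link has the common latency `L`, so its cost is `r * L`, while any
other flow of rate `r` pays at least `L` per unit against the Nash latencies: this is the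
variational inequality. For affine latencies the cross term `y * ℓ(x)` is at most
`y * ℓ(y) + x * ℓ(x) / 4` (complete the square in `a (y - x/2)²`), and summing this over the
links turns the variational inequality into the bound `4/3`.
-/

open Finset

theorem mul_affine_le_mul_affine_add_quarter {a b x y : ℝ} (ha : 0 ≤ a) (hb : 0 ≤ b)
    (hx : 0 ≤ x) :
    y * (a * x + b) ≤ y * (a * y + b) + (1 / 4) * (x * (a * x + b)) := by
  nlinarith [mul_nonneg ha (sq_nonneg (y - x / 2)), mul_nonneg hb hx]

section ParallelLinks

variable {ι : Type*} [Fintype ι] {a b f g : ι → ℝ}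

theorem sum_mul_latency_eq_of_nash {L : ℝ} (hf : ∀ i, 0 ≤ f i)
    (hnash : ∀ i, 0 < f i → a i * f i + b i = L) :
    ∑ i, f i * (a i * f i + b i) = (∑ i, f i) * L := by
  rw [sum_mul]
  refine sum_congr rfl fun i _ => ?_
  rcases (hf i).eq_or_lt with hzero | hpos
  · simp [← hzero]
  · rw [hnash i hpos]

theorem variational_inequality_of_nash {L : ℝ} (hf : ∀ i, 0 ≤ f i) (hg : ∀ i, 0 ≤ g i)
    (hsum : ∑ i, f i = ∑ i, g i)
    (hnash : ∀ i, (0 < f i → a i * f i + b i = L) ∧ L ≤ a i * f i + b i) :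
    ∑ i, f i * (a i * f i + b i) ≤ ∑ i, g i * (a i * f i + b i) :=
  calc ∑ i, f i * (a i * f i + b i) = (∑ i, g i) * L := by
        rw [sum_mul_latency_eq_of_nash hf fun i => (hnash i).1, hsum]
    _ = ∑ i, g i * L := sum_mul ..
    _ ≤ ∑ i, g i * (a i * f i + b i) :=
        sum_le_sum fun i _ => mul_le_mul_of_nonneg_left (hnash i).2 (hg i)

theorem cost_le_four_thirds_of_variational_inequality (ha : ∀ i, 0 ≤ a i) (hb : ∀ i, 0 ≤ b i)
    (hf : ∀ i, 0 ≤ f i)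
    (hvar : ∑ i, f i * (a i * f i + b i) ≤ ∑ i, g i * (a i * f i + b i)) :
    ∑ i, f i * (a i * f i + b i) ≤ (4 / 3) * ∑ i, g i * (a i * g i + b i) := by
  have hcross : ∑ i, g i * (a i * f i + b i) ≤
      ∑ i, g i * (a i * g i + b i) + (1 / 4) * ∑ i, f i * (a i * f i + b i) := by
    rw [mul_sum, ← sum_add_distrib]
    exact sum_le_sum fun i _ => mul_affine_le_mul_affine_add_quarter (ha i) (hb i) (hf i)
  linarith

end ParallelLinks

/-- m parallel links with affine latencies ℓᵢ(x) = aᵢx + bᵢ (aᵢ, bᵢ ≥ 0). If f is a Nash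
flow and f* any flow for the same rate r, then the variational inequality
∑ fᵢℓᵢ(fᵢ) ≤ ∑ fᵢ*ℓᵢ(fᵢ) holds, and consequently ∑ fᵢℓᵢ(fᵢ) ≤ (4/3)·∑ fᵢ*ℓᵢ(fᵢ*). -/
theorem stmt17 (m : ℕ) (a b f g : Fin m → ℝ) (r : ℝ)
    (ha : ∀ i, 0 ≤ a i) (hb : ∀ i, 0 ≤ b i)
    (hf : ∀ i, 0 ≤ f i) (hg : ∀ i, 0 ≤ g i)
    (hfsum : ∑ i, f i = r) (hgsum : ∑ i, g i = r)
    (ℓval : ℝ)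
    (hnash : ∀ i, (0 < f i → a i * f i + b i = ℓval) ∧ ℓval ≤ a i * f i + b i) :
    ∑ i, f i * (a i * f i + b i) ≤ ∑ i, g i * (a i * f i + b i) ∧
    ∑ i, f i * (a i * f i + b i) ≤ (4 / 3) * ∑ i, g i * (a i * g i + b i) := by
  have hvar := variational_inequality_of_nash hf hg (hfsum.trans hgsum.symm) hnash
  exact ⟨hvar, cost_le_four_thirds_of_variational_inequality ha hb hf hvar⟩
end
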